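/- arXiv:2206.07590 — 3 statements merged into one kernel-verified Lean document; each statement's English description precedes it below -/
import Mathlib

section
/- For every integer m ≥ 0 and every x, Σ_{k=0}^{m} C(2m, 2k) (-1)^k P_{2m-2k}(x) − x · Σ_{k=0}^{m-1} C(2m, 2k+1) (-1)^k P_{2m-2k-1}(x) = (-1)^m · x, where C(m,j) denotes the binomial coefficient. -/
/-!
With `D = (1 + X²) d/dX` we have `P n = Dⁿ X`. For a constant `c` with `c² = -1` the factorisation
`1 + X² = (X + c)(X - c)` gives `(D + c)((X + c) f) = (X + c)(D + X) f`, hence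
`(D + c)ⁿ (X + c) = (X + c) Q n`, and expanding `(D + c)ⁿ X = (X + c) Q n - cⁿ⁺¹` binomially
yields `∑ C(n, j) cʲ P (n - j) = (X + c) Q n - cⁿ⁺¹`. For `c = i`, `n = 2m`, evaluated at a rational
`x`, the real and imaginary parts say that the two sums of the theorem are `x Q₂ₘ(x)` and
`Q₂ₘ(x) - (-1)ᵐ`.
-/

open Polynomial Finset

/-- The derivative polynomials for tangent: `P 0 = X`,
`P (n+1) = (1 + X^2) * (P n)'`. -/
noncomputable def P : ℕ → Polynomial ℚ
  | 0 => X
  | n + 1 => (1 + X ^ 2) * derivative (P n)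

/-- The derivative polynomials for secant: `Q 0 = 1`,
`Q (n+1) = (1 + X^2) * (Q n)' + X * Q n`. -/
noncomputable def Q : ℕ → Polynomial ℚ
  | 0 => 1
  | n + 1 => (1 + X ^ 2) * derivative (Q n) + X * Q n

section TanDeriv

variable (R : Type*) [CommRing R]

/-- `(1 + X²) d/dX`, which is `d/dθ` under the substitution `X = tan θ`. -/
noncomputable def tanDeriv : Module.End R R[X] :=
  LinearMap.mulLeft R (1 + X ^ 2) ∘ₗ derivative

variable {R}

lemma tanDeriv_apply (f : R[X]) : tanDeriv R f = (1 + X ^ 2) * derivative f := rfl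

lemma tanDeriv_add_algebraMap_apply (c : R) (f : R[X]) :
    (tanDeriv R + algebraMap R (Module.End R R[X]) c) f = tanDeriv R f + C c * f := by
  simp [Module.algebraMap_end_apply, smul_eq_C_mul]

lemma pow_tanDeriv_add_algebraMap_apply_C (c a : R) (n : ℕ) :
    ((tanDeriv R + algebraMap R (Module.End R R[X]) c) ^ n) (C a) = C (c ^ n * a) := by
  induction n with
  | zero => simp
  | succ n ih =>
    rw [pow_succ', Module.End.mul_apply, ih, tanDeriv_add_algebraMap_apply, tanDeriv_apply,
      derivative_C, mul_zero, zero_add, ← C_mul, ← mul_assoc, ← pow_succ']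

lemma tanDeriv_add_algebraMap_apply_C_add_X_mul {c : R} (hc : c ^ 2 = -1) (f : R[X]) :
    (tanDeriv R + algebraMap R (Module.End R R[X]) c) ((C c + X) * f) =
      (C c + X) * (tanDeriv R f + X * f) := by
  have hC : (C c : R[X]) ^ 2 = -1 := by rw [← C_pow, hc, C_neg, C_1]
  simp only [tanDeriv_add_algebraMap_apply, tanDeriv_apply, derivative_mul, derivative_add,
    derivative_C, derivative_X]
  linear_combination f * hC

variable [Algebra ℚ R]

lemma map_P_eq_pow_tanDeriv_apply_X (n : ℕ) : (P n).map (algebraMap ℚ R) = (tanDeriv R ^ n) X := by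
  induction n with
  | zero => simp [P]
  | succ n ih =>
    rw [pow_succ', Module.End.mul_apply, ← ih, tanDeriv_apply, P]
    simp [derivative_map]

lemma map_Q_succ (n : ℕ) :
    (Q (n + 1)).map (algebraMap ℚ R) =
      tanDeriv R ((Q n).map (algebraMap ℚ R)) + X * (Q n).map (algebraMap ℚ R) := by
  simp [Q, tanDeriv_apply, derivative_map]

lemma pow_tanDeriv_add_algebraMap_apply_C_add_X {c : R} (hc : c ^ 2 = -1) (n : ℕ) :
    ((tanDeriv R + algebraMap R (Module.End R R[X]) c) ^ n) (C c + X) =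
      (C c + X) * (Q n).map (algebraMap ℚ R) := by
  induction n with
  | zero => simp [Q]
  | succ n ih =>
    rw [pow_succ', Module.End.mul_apply, ih, tanDeriv_add_algebraMap_apply_C_add_X_mul hc,
      map_Q_succ]

theorem sum_choose_mul_pow_mul_map_P {c : R} (hc : c ^ 2 = -1) (n : ℕ) :
    ∑ j ∈ range (n + 1), C (n.choose j * c ^ j) * (P (n - j)).map (algebraMap ℚ R) =
      (C c + X) * (Q n).map (algebraMap ℚ R) - C (c ^ (n + 1)) := by
  set c' := algebraMap R (Module.End R R[X]) c
  have h_binom : ((tanDeriv R + c') ^ n) X =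
      ∑ j ∈ range (n + 1), C (n.choose j * c ^ j) * (P (n - j)).map (algebraMap ℚ R) := by
    rw [add_comm, (Algebra.commute_algebraMap_left c (tanDeriv R)).add_pow, LinearMap.sum_apply]
    refine sum_congr rfl fun j _ => ?_
    rw [mul_assoc, ← (Nat.cast_commute _ _).eq, ← mul_assoc, ← map_pow, ← map_natCast
      (algebraMap R (Module.End R R[X])), ← map_mul, Module.End.mul_apply,
      Module.algebraMap_end_apply, smul_eq_C_mul, map_P_eq_pow_tanDeriv_apply_X, mul_comm (c ^ j)]
  rw [← h_binom, ← pow_tanDeriv_add_algebraMap_apply_C_add_X hc, pow_succ,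
    ← pow_tanDeriv_add_algebraMap_apply_C, ← map_sub, add_sub_cancel_left]

end TanDeriv

lemma sum_range_two_mul_add_one {M : Type*} [AddCommMonoid M] (f : ℕ → M) (m : ℕ) :
    ∑ j ∈ range (2 * m + 1), f j =
      ∑ k ∈ range (m + 1), f (2 * k) + ∑ k ∈ range m, f (2 * k + 1) := by
  induction m with
  | zero => simp
  | succ m ih =>
    rw [show 2 * (m + 1) + 1 = 2 * m + 1 + 1 + 1 by ring, sum_range_succ, sum_range_succ, ih,
      sum_range_succ (fun k => f (2 * k)) (m + 1), sum_range_succ (fun k => f (2 * k + 1)) m,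
      show 2 * m + 1 + 1 = 2 * (m + 1) by ring]
    abel

lemma Polynomial.aeval_ratCast {K : Type*} [DivisionRing K] [CharZero K] (p : ℚ[X]) (x : ℚ) :
    aeval (x : K) p = ((p.eval x : ℚ) : K) := by
  rw [← eq_ratCast (algebraMap ℚ K) x, aeval_algebraMap_apply_eq_algebraMap_eval, eq_ratCast]

namespace Complex

lemma ratCast_add_mul_I_inj {a b c d : ℚ} (h : (a : ℂ) + b * I = c + d * I) :
    a = c ∧ b = d := by
  simp only [Complex.ext_iff, add_re, add_im, mul_re, mul_im, ratCast_re, ratCast_im, I_re,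
    I_im] at h
  exact ⟨by exact_mod_cast (by simpa using h.1), by exact_mod_cast (by simpa using h.2)⟩

lemma sum_range_choose_mul_I_pow (f : ℕ → ℚ) (m : ℕ) :
    ∑ j ∈ range (2 * m + 1), ((2 * m).choose j : ℂ) * I ^ j * (f (2 * m - j) : ℂ) =
      ((∑ k ∈ range (m + 1), ((2 * m).choose (2 * k) : ℚ) * (-1) ^ k * f (2 * m - 2 * k) : ℚ) : ℂ) +
      ((∑ k ∈ range m, ((2 * m).choose (2 * k + 1) : ℚ) * (-1) ^ k * f (2 * m - 2 * k - 1) : ℚ) : ℂ)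
        * I := by
  rw [sum_range_two_mul_add_one]
  push_cast [sum_mul]
  congr 1 <;> refine sum_congr rfl fun k _ => ?_
  · rw [pow_mul, I_sq]
  · rw [Nat.sub_sub, pow_succ, pow_mul, I_sq]
    ring

end Complex

open Complex in
theorem P_even_alternating_identity (m : ℕ) (x : ℚ) :
    (∑ k ∈ Finset.range (m + 1),
        ((2 * m).choose (2 * k) : ℚ) * (-1) ^ k * (P (2 * m - 2 * k)).eval x) -
      x * ∑ k ∈ Finset.range m,
        ((2 * m).choose (2 * k + 1) : ℚ) * (-1) ^ k * (P (2 * m - 2 * k - 1)).eval x =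
    (-1) ^ m * x := by
  have h := congrArg (eval (x : ℂ)) (sum_choose_mul_pow_mul_map_P I_sq (2 * m))
  simp only [eval_finsetSum, eval_mul, eval_sub, eval_add, eval_C, eval_X, eval_map_algebraMap,
    aeval_ratCast] at h
  rw [sum_range_choose_mul_I_pow (fun n => (P n).eval x), pow_succ, pow_mul, I_sq] at h
  obtain ⟨h_re, h_im⟩ := ratCast_add_mul_I_inj (c := x * (Q (2 * m)).eval x)
    (d := (Q (2 * m)).eval x - (-1) ^ m) (by rw [h]; push_cast; ring)
  rw [h_re, h_im]
  ring
end

section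
/- For every integer m ≥ 0, Σ_{k=0}^{m} C(2m+1, 2k+1) (-1)^k 2^{2m-2k} E_{2m-2k} − Σ_{k=0}^{m} C(2m+1, 2k) (-1)^k 2^{2m-2k+1} E_{2m-2k+1} = (-1)^{m+1}, where C(m,j) denotes the binomial coefficient. -/
open Polynomial Finset

/-- The Euler numbers: `E (2j) = Q (2j) (0)` (secant numbers) and
`E (2j+1) = P (2j+1) (0)` (tangent numbers). -/
noncomputable def E (n : ℕ) : ℚ := if Even n then (Q n).eval 0 else (P n).eval 0

/-!
Let `c, s` be the formal cosine and sine over `ℚ`, `T = s / c` and `S = 1 / c`. For a derivation `D`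
with `D a = 1 + a²` one has `Dⁿ a = Pₙ(a)`, and if also `D b = a b` then `Dⁿ b = Qₙ(a) b`. Applied to
`T` and `S`, this makes `F = S + T` the exponential generating function of the Euler numbers (by
parity, `Pₙ(0) = 0` for even `n` and `Qₙ(0) = 0` for odd `n`). Since `S² = 1 + T²`, `2 F' = 1 + F²`,
so `G(x) = F(2x)` satisfies `G' = 1 + G²`; then `H = G (c - s) - (c + s)` satisfies `H' = G H` and
`H(0) = 0`, hence `H = 0`. The identity is the coefficient of `x^(2m+1)` in `G (c - s) = c + s`.
-/

open scoped PowerSeries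

theorem Finset.sum_range_two_mul {M : Type*} [AddCommMonoid M] (f : ℕ → M) (n : ℕ) :
    ∑ i ∈ range (2 * n), f i = ∑ k ∈ range n, (f (2 * k) + f (2 * k + 1)) := by
  induction n with
  | zero => simp
  | succ n ih => rw [mul_add_one, sum_range_succ, sum_range_succ, sum_range_succ, ih, add_assoc]

namespace Derivation

theorem iterate_leibniz {R A : Type*} [CommSemiring R] [CommSemiring A] [Algebra R A]
    (D : Derivation R A A) (n : ℕ) (a b : A) :
    D^[n] (a * b) = ∑ i ∈ range (n + 1), n.choose i • (D^[i] a * D^[n - i] b) := by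
  rw [← Nat.sum_antidiagonal_eq_sum_range_succ (fun i j ↦ n.choose i • (D^[i] a * D^[j] b))]
  induction n with
  | zero => simp
  | succ n ih =>
    rw [sum_antidiagonal_choose_succ_nsmul (fun i j ↦ D^[i] a * D^[j] b) n]
    simp only [Function.iterate_succ_apply', ih, map_sum, map_nsmul, leibniz, smul_eq_mul,
      smul_add, sum_add_distrib]
    refine congrArg _ (sum_congr rfl fun ⟨i, j⟩ hij ↦ ?_)
    rw [n.choose_symm_of_eq_add (mem_antidiagonal.1 hij).symm, mul_comm]

variable {A : Type*} [CommRing A] [Algebra ℚ A] (D : Derivation ℚ A A)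

theorem iterate_eq_aeval_P {a : A} (ha : D a = 1 + a ^ 2) (n : ℕ) : D^[n] a = aeval a (P n) := by
  induction n with
  | zero => simp [P]
  | succ n ih =>
    rw [Function.iterate_succ_apply', ih, map_aeval, ha, P]
    simp only [map_mul, map_add, map_one, map_pow, aeval_X, smul_eq_mul]
    ring

theorem iterate_eq_aeval_Q_mul {a b : A} (ha : D a = 1 + a ^ 2) (hb : D b = a * b) (n : ℕ) :
    D^[n] b = aeval a (Q n) * b := by
  induction n with
  | zero => simp [Q]
  | succ n ih =>
    rw [Function.iterate_succ_apply', ih, leibniz, map_aeval, ha, hb, Q]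
    simp only [map_mul, map_add, map_one, map_pow, aeval_X, smul_eq_mul]
    ring

end Derivation

theorem Polynomial.derivative_comp_neg_X {R : Type*} [CommRing R] (p : R[X]) :
    (derivative p).comp (-X) = -derivative (p.comp (-X)) := by
  simp [derivative_comp]

theorem Polynomial.eval_zero_eq_zero_of_comp_neg_X {R : Type*} [CommRing R] [IsAddTorsionFree R]
    {p : R[X]} (hp : p.comp (-X) = -p) : p.eval 0 = 0 := by
  have h := congrArg (eval 0) hp
  rw [eval_comp, eval_neg, eval_X, neg_zero, eval_neg] at h
  exact self_eq_neg.mp h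

theorem P_comp_neg_X (n : ℕ) : (P n).comp (-X) = (-1) ^ (n + 1) * P n := by
  induction n with
  | zero => simp [P]
  | succ n ih =>
    rw [P, mul_comp, derivative_comp_neg_X, ih]
    simp only [add_comp, one_comp, pow_comp, X_comp, derivative_mul, derivative_pow,
      derivative_neg, derivative_one]
    ring

theorem Q_comp_neg_X (n : ℕ) : (Q n).comp (-X) = (-1) ^ n * Q n := by
  induction n with
  | zero => simp [Q]
  | succ n ih =>
    rw [Q, add_comp, mul_comp, mul_comp, derivative_comp_neg_X, ih]
    simp only [add_comp, one_comp, pow_comp, X_comp, derivative_mul, derivative_pow,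
      derivative_neg, derivative_one]
    ring

theorem E_eq_eval_P_add_eval_Q (n : ℕ) : E n = (P n).eval 0 + (Q n).eval 0 := by
  rcases Nat.even_or_odd n with hn | hn
  · have hP : (P n).eval 0 = 0 :=
      eval_zero_eq_zero_of_comp_neg_X (by rw [P_comp_neg_X, hn.add_one.neg_one_pow, neg_one_mul])
    rw [E, if_pos hn, hP, zero_add]
  · have hQ : (Q n).eval 0 = 0 :=
      eval_zero_eq_zero_of_comp_neg_X (by rw [Q_comp_neg_X, hn.neg_one_pow, neg_one_mul])
    rw [E, if_neg (Nat.not_even_iff_odd.2 hn), hQ, add_zero]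

namespace PowerSeries

section

variable {R : Type*} [CommSemiring R]

theorem derivative_rescale (a : R) (f : R⟦X⟧) :
    d⁄dX R (rescale a f) = C a * rescale a (d⁄dX R f) := by
  ext n
  simp only [coeff_derivative, coeff_rescale, coeff_C_mul, pow_succ]
  ring

theorem constantCoeff_rescale (a : R) (f : R⟦X⟧) :
    constantCoeff (rescale a f) = constantCoeff f := by
  rw [← coeff_zero_eq_constantCoeff_apply, coeff_rescale, pow_zero, one_mul,
    coeff_zero_eq_constantCoeff_apply]

theorem constantCoeff_iterate_derivative_rescale (a : R) (f : R⟦X⟧) (n : ℕ) :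
    constantCoeff ((d⁄dX R)^[n] (rescale a f)) = a ^ n * constantCoeff ((d⁄dX R)^[n] f) := by
  simp only [constantCoeff_iterate_derivative, coeff_rescale]
  ring

theorem constantCoeff_iterate_derivative_mul (f g : R⟦X⟧) (n : ℕ) :
    constantCoeff ((d⁄dX R)^[n] (f * g)) = ∑ i ∈ range (n + 1),
      n.choose i * constantCoeff ((d⁄dX R)^[i] f) * constantCoeff ((d⁄dX R)^[n - i] g) := by
  simp only [Derivation.iterate_leibniz, map_sum, nsmul_eq_mul, map_mul, map_natCast, mul_assoc]

end

theorem eq_zero_of_derivative_eq_mul {R : Type*} [CommRing R] [IsAddTorsionFree R] {f g : R⟦X⟧}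
    (hf : d⁄dX R f = g * f) (hf0 : constantCoeff f = 0) : f = 0 := by
  have hiter : ∀ n, ∃ u, (d⁄dX R)^[n] f = u * f := by
    intro n
    induction n with
    | zero => exact ⟨1, by simp⟩
    | succ n ih =>
      obtain ⟨u, hu⟩ := ih
      refine ⟨d⁄dX R u + u * g, ?_⟩
      rw [Function.iterate_succ_apply', hu, Derivation.leibniz, hf, smul_eq_mul, smul_eq_mul]
      ring
  ext n
  obtain ⟨u, hu⟩ := hiter n
  have h := constantCoeff_iterate_derivative f n
  rw [hu, map_mul, hf0, mul_zero, ← nsmul_eq_mul] at h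
  exact nsmul_right_injective (Nat.factorial_ne_zero n) (by simpa using h.symm)

section Trigonometric

variable {A : Type*} [CommRing A] [Algebra ℚ A]

theorem derivative_sin : d⁄dX A (sin A) = cos A := by
  ext n
  rw [coeff_derivative, sin, cos, coeff_mk, coeff_mk]
  have hcast : ((n : A) + 1) = algebraMap ℚ A (n + 1) := by simp
  rcases Nat.even_or_odd n with hn | hn
  · rw [if_neg (by simpa [Nat.even_add_one] using hn), if_pos hn, hcast, ← map_mul]
    obtain ⟨k, rfl⟩ := hn
    have : (k + k + 1) / 2 = (k + k) / 2 := by omega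
    rw [this, Nat.factorial_succ]
    congr 1
    push_cast
    field_simp
  · rw [if_pos (by simpa [Nat.even_add_one] using hn), if_neg (Nat.not_even_iff_odd.2 hn),
      zero_mul]

theorem derivative_cos : d⁄dX A (cos A) = -sin A := by
  ext n
  rw [coeff_derivative, sin, cos, map_neg, coeff_mk, coeff_mk]
  have hcast : ((n : A) + 1) = algebraMap ℚ A (n + 1) := by simp
  rcases Nat.even_or_odd n with hn | hn
  · rw [if_neg (by simpa [Nat.even_add_one] using hn), if_pos hn, zero_mul, neg_zero]
  · rw [if_pos (by simpa [Nat.even_add_one] using hn), if_neg (Nat.not_even_iff_odd.2 hn), hcast,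
      ← map_mul, ← map_neg]
    obtain ⟨k, rfl⟩ := hn
    have : (2 * k + 1 + 1) / 2 = (2 * k + 1) / 2 + 1 := by omega
    rw [this, Nat.factorial_succ]
    congr 1
    push_cast
    field_simp
    ring

@[simp] theorem constantCoeff_sin : constantCoeff (sin A) = 0 := by
  simp [sin, ← coeff_zero_eq_constantCoeff_apply]

@[simp] theorem constantCoeff_cos : constantCoeff (cos A) = 1 := by
  simp [cos, ← coeff_zero_eq_constantCoeff_apply]

theorem constantCoeff_iterate_derivative_cos (n : ℕ) :
    constantCoeff ((d⁄dX A)^[n] (cos A)) = if Even n then (-1) ^ (n / 2) else 0 := by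
  rw [constantCoeff_iterate_derivative, cos, coeff_mk]
  split_ifs
  · rw [← map_natCast (algebraMap ℚ A), ← map_mul, mul_div_cancel₀ _ (by positivity)]
    simp
  · rw [mul_zero]

theorem constantCoeff_iterate_derivative_sin (n : ℕ) :
    constantCoeff ((d⁄dX A)^[n] (sin A)) = if Even n then 0 else (-1) ^ (n / 2) := by
  rw [constantCoeff_iterate_derivative, sin, coeff_mk]
  split_ifs
  · rw [mul_zero]
  · rw [← map_natCast (algebraMap ℚ A), ← map_mul, mul_div_cancel₀ _ (by positivity)]
    simp

theorem cos_sq_add_sin_sq [IsAddTorsionFree A] : cos A ^ 2 + sin A ^ 2 = 1 :=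
  derivative.ext (by simp [derivative_sin, derivative_cos]; ring) (by simp)

end Trigonometric

noncomputable def secSeries : ℚ⟦X⟧ := (cos ℚ)⁻¹

noncomputable def tanSeries : ℚ⟦X⟧ := sin ℚ * secSeries

theorem cos_mul_secSeries : cos ℚ * secSeries = 1 :=
  PowerSeries.mul_inv_cancel _ (by simp)

@[simp] theorem constantCoeff_secSeries : constantCoeff secSeries = 1 := by
  simp [secSeries, constantCoeff_inv]

@[simp] theorem constantCoeff_tanSeries : constantCoeff tanSeries = 0 := by
  simp [tanSeries]

theorem derivative_secSeries : d⁄dX ℚ secSeries = tanSeries * secSeries := by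
  rw [secSeries, derivative_inv', derivative_cos, tanSeries, secSeries]
  ring

theorem derivative_tanSeries : d⁄dX ℚ tanSeries = 1 + tanSeries ^ 2 := by
  rw [tanSeries, Derivation.leibniz, derivative_secSeries, derivative_sin, smul_eq_mul,
    smul_eq_mul, tanSeries]
  linear_combination cos_mul_secSeries

theorem secSeries_sq : secSeries ^ 2 = 1 + tanSeries ^ 2 := by
  rw [tanSeries]
  linear_combination (-secSeries ^ 2) * cos_sq_add_sin_sq (A := ℚ) +
    (cos ℚ * secSeries + 1) * cos_mul_secSeries

theorem constantCoeff_iterate_derivative_tanSeries (n : ℕ) :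
    constantCoeff ((d⁄dX ℚ)^[n] tanSeries) = (P n).eval 0 := by
  rw [Derivation.iterate_eq_aeval_P _ derivative_tanSeries, aeval_def, hom_eval₂]
  simp [coeff_zero_eq_eval_zero]

theorem constantCoeff_iterate_derivative_secSeries (n : ℕ) :
    constantCoeff ((d⁄dX ℚ)^[n] secSeries) = (Q n).eval 0 := by
  rw [Derivation.iterate_eq_aeval_Q_mul _ derivative_tanSeries derivative_secSeries, map_mul,
    aeval_def, hom_eval₂]
  simp [coeff_zero_eq_eval_zero]

noncomputable def eulerSeries : ℚ⟦X⟧ := secSeries + tanSeries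

theorem constantCoeff_iterate_derivative_eulerSeries (n : ℕ) :
    constantCoeff ((d⁄dX ℚ)^[n] eulerSeries) = E n := by
  rw [eulerSeries, iterate_map_add, map_add, constantCoeff_iterate_derivative_secSeries,
    constantCoeff_iterate_derivative_tanSeries, E_eq_eval_P_add_eval_Q, add_comm]

theorem two_mul_derivative_eulerSeries : 2 * d⁄dX ℚ eulerSeries = 1 + eulerSeries ^ 2 := by
  rw [eulerSeries, map_add, derivative_secSeries, derivative_tanSeries]
  linear_combination (-1) * secSeries_sq

theorem derivative_rescale_two_eulerSeries :
    d⁄dX ℚ (rescale 2 eulerSeries) = 1 + rescale 2 eulerSeries ^ 2 := by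
  rw [derivative_rescale, map_ofNat, ← map_ofNat (rescale (2 : ℚ)) 2, ← map_mul,
    two_mul_derivative_eulerSeries, map_add, map_one, map_pow]

theorem rescale_two_eulerSeries_mul_cos_sub_sin :
    rescale 2 eulerSeries * (cos ℚ - sin ℚ) = cos ℚ + sin ℚ := by
  rw [← sub_eq_zero]
  refine eq_zero_of_derivative_eq_mul (g := rescale 2 eulerSeries) ?_
    (by simp [constantCoeff_rescale, eulerSeries])
  rw [map_sub, Derivation.leibniz, derivative_rescale_two_eulerSeries, map_sub, map_add,
    derivative_sin, derivative_cos, smul_eq_mul, smul_eq_mul]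
  ring

end PowerSeries

open PowerSeries in
theorem euler_odd_even_alternating_identity (m : ℕ) :
    (∑ k ∈ Finset.range (m + 1),
        ((2 * m + 1).choose (2 * k + 1) : ℚ) * (-1) ^ k * 2 ^ (2 * m - 2 * k) *
          E (2 * m - 2 * k)) -
      (∑ k ∈ Finset.range (m + 1),
        ((2 * m + 1).choose (2 * k) : ℚ) * (-1) ^ k * 2 ^ (2 * m - 2 * k + 1) *
          E (2 * m - 2 * k + 1)) =
    (-1) ^ (m + 1) := by
  have h : constantCoeff ((d⁄dX ℚ)^[2 * m + 1] ((cos ℚ - sin ℚ) * rescale 2 eulerSeries)) =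
      constantCoeff ((d⁄dX ℚ)^[2 * m + 1] (cos ℚ + sin ℚ)) := by
    rw [mul_comm (cos ℚ - sin ℚ), rescale_two_eulerSeries_mul_cos_sub_sin]
  rw [constantCoeff_iterate_derivative_mul, show 2 * m + 1 + 1 = 2 * (m + 1) by ring,
    Finset.sum_range_two_mul] at h
  have hhalf (k : ℕ) : 2 * k / 2 = k ∧ (2 * k + 1) / 2 = k := by omega
  simp only [constantCoeff_iterate_derivative_rescale, constantCoeff_iterate_derivative_eulerSeries,
    iterate_map_sub, iterate_map_add, map_sub, map_add, constantCoeff_iterate_derivative_cos,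
    constantCoeff_iterate_derivative_sin, hhalf, even_two_mul, Nat.not_even_bit1, if_true,
    if_false, sub_zero, zero_sub, zero_add, Nat.reduceSubDiff, mul_neg] at h
  rw [pow_succ, ← h, sum_mul, ← sum_sub_distrib]
  refine sum_congr rfl fun k hk ↦ ?_
  rw [show 2 * m + 1 - 2 * k = 2 * m - 2 * k + 1 by have := mem_range.1 hk; omega]
  ring
end

section
/- For every integer n ≥ 0, (2n+1) · 2^{2n} · E_{2n} = s_{2n+1} + Σ_{i=0}^{n-1} C(2n+1, 2i+2) (-1)^{i+2} (4^{i+1} − 2) B_{2i+2} s_{2n-2i-1}, where C(m,j) denotes the binomial coefficient and B_j denotes the j-th Bernoulli number. -/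
open Polynomial Finset

/-- The Springer numbers `s n = Q n (1)`. -/
noncomputable def s (n : ℕ) : ℚ := (Q n).eval 1

/-!
Write `x = tan θ`. Then `sec⁽ⁿ⁾ θ = Q n (tan θ) * sec θ` and
`cos⁽ⁿ⁾ θ = cosDerivPoly n (tan θ) * cos θ`, so Leibniz's rule applied to `sec θ * cos θ = 1`
gives the polynomial identity `∑ C(n, k) Q k * cosDerivPoly (n - k) = δ n 0`. Evaluating it at
`0` and `1` identifies the exponential generating functions `∑ E (2n) z²ⁿ / (2n)! = 1 / cos z`
and `S z = ∑ s n zⁿ / n! = 1 / (cos z - sin z)`. Hence `S z - S (-z) = 2 sin z / cos 2z`, and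
multiplying by `z / sin z = ∑ (-1)ⁿ⁻¹ (4ⁿ - 2) B (2n) z²ⁿ / (2n)!` gives `2 z / cos 2z`;
comparing the coefficients of `z²ⁿ⁺¹` gives the identity. The two trigonometric identities needed are the
corresponding identities for `exp`, read through `z ↦ i z`.
-/

theorem Derivation.sum_antidiagonal_choose_nsmul_mul_eq_iterate {R A : Type*} [CommSemiring R]
    [CommRing A] [Algebra R A] (D : Derivation R A A) (a : A) {f g : ℕ → A}
    (hf : ∀ k, f (k + 1) = D (f k) + a * f k) (hg : ∀ k, g (k + 1) = D (g k) - a * g k)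
    (n : ℕ) :
    ∑ ij ∈ antidiagonal n, n.choose ij.1 • (f ij.1 * g ij.2) = D^[n] (f 0 * g 0) := by
  induction n with
  | zero => simp
  | succ n ih =>
    rw [sum_antidiagonal_choose_succ_nsmul (fun i j => f i * g j), ← sum_add_distrib,
      Function.iterate_succ_apply', ← ih, map_sum]
    refine sum_congr rfl fun ij hij => ?_
    rw [Nat.choose_symm_of_eq_add (mem_antidiagonal.mp hij).symm, map_nsmul, ← smul_add,
      hf, hg, Derivation.leibniz, smul_eq_mul, smul_eq_mul]
    ring

/-- `cos⁽ⁿ⁾ θ = cosDerivPoly n (tan θ) * cos θ`. -/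
noncomputable def cosDerivPoly (n : ℕ) : ℚ[X] :=
  if Even n then C ((-1) ^ (n / 2)) else -C ((-1) ^ (n / 2)) * X

theorem cosDerivPoly_succ (n : ℕ) :
    cosDerivPoly (n + 1) = (1 + X ^ 2) * derivative (cosDerivPoly n) - X * cosDerivPoly n := by
  obtain ⟨k, rfl | rfl⟩ := Nat.even_or_odd' n
  · have hk : (2 * k + 1) / 2 = k := by omega
    have hk' : 2 * k / 2 = k := by omega
    simp only [cosDerivPoly, even_two_mul, Nat.not_even_bit1, if_true, if_false, hk, hk',
      derivative_C, mul_zero, zero_sub]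
    ring
  · have hk : (2 * k + 1 + 1) / 2 = k + 1 := by omega
    have hk' : (2 * k + 1) / 2 = k := by omega
    simp only [cosDerivPoly, Nat.even_add_one, even_two_mul, not_false_eq_true,
      not_true_eq_false, if_true, if_false, hk, hk', derivative_mul, derivative_neg, derivative_C,
      derivative_X, pow_succ, C_mul, C_neg, C_1]
    ring

theorem sum_antidiagonal_choose_nsmul_Q_mul_cosDerivPoly (n : ℕ) :
    ∑ ij ∈ antidiagonal n, n.choose ij.1 • (Q ij.1 * cosDerivPoly ij.2) =
      if n = 0 then 1 else 0 := by
  let D : Derivation ℚ ℚ[X] ℚ[X] := (1 + X ^ 2 : ℚ[X]) • derivative'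
  rw [D.sum_antidiagonal_choose_nsmul_mul_eq_iterate (X : ℚ[X]) (fun _ => rfl)
    cosDerivPoly_succ]
  have h_one : Q 0 * cosDerivPoly 0 = 1 := by simp [Q, cosDerivPoly]
  rw [h_one]
  cases n with
  | zero => simp
  | succ n =>
    rw [Function.iterate_succ_apply, D.map_one_eq_zero, Function.iterate_fixed (map_zero D)]
    simp

noncomputable def egf {K : Type*} [Field K] (f : ℕ → K) : PowerSeries K :=
  PowerSeries.mk fun n => f n / n.factorial

section egf

variable {K : Type*} [Field K]

theorem coeff_egf (f : ℕ → K) (n : ℕ) : PowerSeries.coeff n (egf f) = f n / n.factorial :=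
  PowerSeries.coeff_mk _ _

theorem egf_mul_egf [CharZero K] (f g : ℕ → K) :
    egf f * egf g = egf fun n => ∑ ij ∈ antidiagonal n, n.choose ij.1 • (f ij.1 * g ij.2) := by
  ext n
  rw [PowerSeries.coeff_mul, coeff_egf, sum_div]
  refine sum_congr rfl fun ij hij => ?_
  obtain ⟨i, j⟩ := ij
  obtain rfl : i + j = n := mem_antidiagonal.mp hij
  have : ((i + j).factorial : K) ≠ 0 := Nat.cast_ne_zero.mpr (Nat.factorial_ne_zero _)
  rw [coeff_egf, coeff_egf, nsmul_eq_mul, Nat.cast_add_choose]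
  field_simp

theorem rescale_egf (a : K) (f : ℕ → K) :
    PowerSeries.rescale a (egf f) = egf fun n => a ^ n * f n := by
  ext n
  rw [PowerSeries.coeff_rescale, coeff_egf, coeff_egf, mul_div_assoc]

end egf

theorem egf_eval_Q_mul_egf_eval_cosDerivPoly (t : ℚ) :
    egf (fun n => (Q n).eval t) * egf (fun n => (cosDerivPoly n).eval t) = 1 := by
  ext n
  have h := congrArg (eval t) (sum_antidiagonal_choose_nsmul_Q_mul_cosDerivPoly n)
  simp only [eval_finsetSum, eval_smul, eval_mul, apply_ite (eval t), eval_one, eval_zero] at h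
  rw [egf_mul_egf, coeff_egf, h, PowerSeries.coeff_one]
  split_ifs <;> simp_all

theorem egf_eval_zero_cosDerivPoly :
    egf (fun n => (cosDerivPoly n).eval 0) = PowerSeries.cos ℚ := by
  ext n
  by_cases hn : Even n <;> simp [coeff_egf, PowerSeries.cos, cosDerivPoly, hn]

theorem egf_eval_one_cosDerivPoly :
    egf (fun n => (cosDerivPoly n).eval 1) = PowerSeries.cos ℚ - PowerSeries.sin ℚ := by
  ext n
  by_cases hn : Even n <;>
    simp [coeff_egf, PowerSeries.cos, PowerSeries.sin, cosDerivPoly, hn, neg_div]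

theorem isUnit_two_of_algebra_rat (B : Type*) [Ring B] [Algebra ℚ B] : IsUnit (2 : B) := by
  rw [← map_ofNat (algebraMap ℚ B) 2]
  exact (isUnit_of_invertible _).map _

section SqEqNegOne

open PowerSeries

theorem PowerSeries.rescale_C {R : Type*} [CommSemiring R] (a b : R) : rescale a (C b) = C b := by
  ext n
  rcases n with _ | n <;> simp [coeff_rescale, coeff_C]

variable {A : Type*} [CommRing A] [Algebra ℚ A]

theorem PowerSeries.rescale_neg_one_cos : rescale (-1 : A) (cos A) = cos A := by
  ext n
  by_cases hn : Even n <;> simp [coeff_rescale, cos, hn]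

theorem PowerSeries.rescale_neg_one_sin : rescale (-1 : A) (sin A) = -sin A := by
  ext n
  rcases Nat.even_or_odd n with hn | hn
  · simp [coeff_rescale, sin, hn]
  · simp [coeff_rescale, sin, Nat.not_even_iff_odd.mpr hn, hn.neg_one_pow]

theorem PowerSeries.rescale_exp_sq (a : A) :
    rescale a (exp A) ^ 2 = rescale 2 (rescale a (exp A)) := by
  rw [← map_pow, exp_pow_eq_rescale_exp, rescale_rescale, rescale_rescale, mul_comm,
    Nat.cast_ofNat]

variable {i : A}

theorem PowerSeries.rescale_exp_of_sq_eq_neg_one (hi : i ^ 2 = -1) :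
    rescale i (exp A) = cos A + C i * sin A := by
  ext n
  obtain ⟨k, rfl | rfl⟩ := Nat.even_or_odd' n
  · have hk : 2 * k / 2 = k := by omega
    simp [coeff_rescale, coeff_exp, cos, sin, hk, pow_mul, hi, div_eq_mul_inv]
  · have hk : (2 * k + 1) / 2 = k := by omega
    simp [coeff_rescale, coeff_exp, cos, sin, hk, pow_succ, pow_mul, hi, div_eq_mul_inv]
    ring

theorem PowerSeries.cos_sq_sub_sin_sq_of_sq_eq_neg_one (hi : i ^ 2 = -1) :
    cos A ^ 2 - sin A ^ 2 = rescale 2 (cos A) := by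
  have h_pos := rescale_exp_sq i
  have h_neg := rescale_exp_sq (-i)
  rw [rescale_exp_of_sq_eq_neg_one hi] at h_pos
  rw [rescale_exp_of_sq_eq_neg_one (by rwa [neg_sq])] at h_neg
  have hC : C i ^ 2 = -1 := by rw [← map_pow, hi, map_neg, map_one]
  refine (isUnit_two_of_algebra_rat A⟦X⟧).mul_left_cancel ?_
  simp only [map_add, map_mul, rescale_C, map_neg] at h_pos h_neg
  linear_combination h_pos + h_neg + -2 * sin A ^ 2 * hC

theorem PowerSeries.bernoulli_sub_mul_sin_of_sq_eq_neg_one (hi : i ^ 2 = -1) :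
    (2 * rescale i (bernoulliPowerSeries A) - rescale (2 * i) (bernoulliPowerSeries A)) * sin A
      = X := by
  set B := bernoulliPowerSeries A
  set e := rescale i (exp A) with he_def
  have hB₁ : rescale i B * (e - 1) = C i * X := by
    simpa [B, e] using congrArg (rescale i) (bernoulliPowerSeries_mul_exp_sub_one A)
  have hB₂ : rescale (2 * i) B * (rescale (2 * i) (exp A) - 1) = 2 * C i * X := by
    simpa [B, map_ofNat] using congrArg (rescale (2 * i)) (bernoulliPowerSeries_mul_exp_sub_one A)
  have hsq : e ^ 2 = rescale (2 * i) (exp A) := by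
    rw [he_def, rescale_exp_sq, rescale_rescale, mul_comm]
  have he : e * rescale (-i) (exp A) = 1 := by
    simp [e, exp_mul_exp_eq_exp_add]
  have hsin : e - rescale (-i) (exp A) = 2 * C i * sin A := by
    rw [he_def, rescale_exp_of_sq_eq_neg_one hi, rescale_exp_of_sq_eq_neg_one (by rwa [neg_sq]),
      map_neg]
    ring
  have hC : IsUnit (C i) := IsUnit.of_mul_eq_one (-C i) (by
    rw [← neg_mul_eq_mul_neg, ← sq, ← map_pow, hi, map_neg, map_one, neg_neg])
  have hu : IsUnit (2 * C i * e) :=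
    ((isUnit_two_of_algebra_rat A⟦X⟧).mul hC).mul ((isUnit_exp A).map _)
  refine hu.mul_left_cancel ?_
  -- `e - e⁻¹ = 2 i sin` and `2 / (e - 1) - 2 / (e² - 1) = 2 e / (e² - 1)`
  linear_combination (-(e * (2 * rescale i B - rescale (2 * i) B))) * hsin
    - (2 * rescale i B - rescale (2 * i) B) * he + 2 * (e + 1) * hB₁ - hB₂
    - rescale (2 * i) B * hsq

end SqEqNegOne

theorem PowerSeries.cos_sq_sub_sin_sq :
    cos ℚ ^ 2 - sin ℚ ^ 2 = rescale 2 (cos ℚ) := by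
  apply map_injective (algebraMap ℚ ℂ) (algebraMap ℚ ℂ).injective
  rw [← rescale_map]
  simpa using cos_sq_sub_sin_sq_of_sq_eq_neg_one Complex.I_sq

theorem two_sub_two_pow_mul_bernoulli_of_odd {n : ℕ} (hn : Odd n) :
    (2 - 2 ^ n) * _root_.bernoulli n = 0 := by
  rcases eq_or_ne n 1 with rfl | h1
  · norm_num
  · rw [bernoulli_eq_zero_of_odd hn (by have := hn.pos; omega), mul_zero]

/-- `z / sin z = ∑ cscCoeff n * zⁿ / n!`. -/
noncomputable def cscCoeff (n : ℕ) : ℚ := (-1) ^ (n / 2) * (2 - 2 ^ n) * _root_.bernoulli n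

theorem cscCoeff_of_odd {n : ℕ} (hn : Odd n) : cscCoeff n = 0 := by
  rw [cscCoeff, mul_assoc, two_sub_two_pow_mul_bernoulli_of_odd hn, mul_zero]

theorem rescale_neg_one_egf_cscCoeff : PowerSeries.rescale (-1) (egf cscCoeff) = egf cscCoeff := by
  rw [rescale_egf]
  congr 1
  funext n
  rcases Nat.even_or_odd n with hn | hn
  · rw [hn.neg_one_pow, one_mul]
  · rw [cscCoeff_of_odd hn, mul_zero]

theorem cast_cscCoeff (n : ℕ) :
    (cscCoeff n : ℂ) = Complex.I ^ n * ((2 - 2 ^ n) * _root_.bernoulli n : ℚ) := by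
  obtain ⟨k, rfl | rfl⟩ := Nat.even_or_odd' n
  · have hk : 2 * k / 2 = k := by omega
    simp [cscCoeff, hk, pow_mul, mul_assoc]
  · rw [cscCoeff_of_odd ⟨k, rfl⟩, two_sub_two_pow_mul_bernoulli_of_odd ⟨k, rfl⟩]
    simp

theorem map_egf_cscCoeff :
    PowerSeries.map (algebraMap ℚ ℂ) (egf cscCoeff) =
      2 * PowerSeries.rescale Complex.I (bernoulliPowerSeries ℂ) -
        PowerSeries.rescale (2 * Complex.I) (bernoulliPowerSeries ℂ) := by
  ext n
  rw [← map_ofNat PowerSeries.C 2]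
  simp [coeff_egf, PowerSeries.coeff_rescale, bernoulliPowerSeries, cast_cscCoeff, mul_pow]
  ring

theorem egf_cscCoeff_mul_sin : egf cscCoeff * PowerSeries.sin ℚ = PowerSeries.X := by
  apply PowerSeries.map_injective (algebraMap ℚ ℂ) (algebraMap ℚ ℂ).injective
  rw [map_mul, map_egf_cscCoeff, PowerSeries.map_sin, PowerSeries.map_X]
  exact PowerSeries.bernoulli_sub_mul_sin_of_sq_eq_neg_one Complex.I_sq

section Springer

open PowerSeries

theorem egf_springer_mul_cos_sub_sin : egf s * (cos ℚ - sin ℚ) = 1 := by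
  rw [← egf_eval_one_cosDerivPoly]
  exact egf_eval_Q_mul_egf_eval_cosDerivPoly 1

theorem egf_eval_zero_Q_mul_cos : egf (fun n => (Q n).eval 0) * cos ℚ = 1 := by
  rw [← egf_eval_zero_cosDerivPoly]
  exact egf_eval_Q_mul_egf_eval_cosDerivPoly 0

theorem rescale_neg_one_egf_springer_mul_cos_add_sin :
    rescale (-1) (egf s) * (cos ℚ + sin ℚ) = 1 := by
  simpa [rescale_neg_one_cos, rescale_neg_one_sin] using
    congrArg (rescale (-1)) egf_springer_mul_cos_sub_sin

theorem egf_springer_mul_rescale_neg_one :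
    egf s * rescale (-1) (egf s) = rescale 2 (egf fun n => (Q n).eval 0) := by
  refine left_inv_eq_right_inv (a := rescale 2 (cos ℚ)) ?_ ?_
  · rw [← cos_sq_sub_sin_sq]
    linear_combination (rescale (-1) (egf s) * (cos ℚ + sin ℚ)) * egf_springer_mul_cos_sub_sin +
      rescale_neg_one_egf_springer_mul_cos_add_sin
  · rw [← map_mul, mul_comm, egf_eval_zero_Q_mul_cos, map_one]

theorem egf_cscCoeff_mul_egf_springer_sub_rescale_neg_one :
    egf cscCoeff * egf s - rescale (-1) (egf cscCoeff * egf s) =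
      2 * PowerSeries.X * rescale 2 (egf fun n => (Q n).eval 0) := by
  rw [map_mul, rescale_neg_one_egf_cscCoeff, ← egf_springer_mul_rescale_neg_one]
  linear_combination (2 * egf s * rescale (-1) (egf s)) * egf_cscCoeff_mul_sin +
    egf cscCoeff * (rescale (-1) (egf s) * egf_springer_mul_cos_sub_sin -
      egf s * rescale_neg_one_egf_springer_mul_cos_add_sin)

theorem sum_antidiagonal_choose_cscCoeff_mul_springer (n : ℕ) :
    ∑ ij ∈ antidiagonal (2 * n + 1), (2 * n + 1).choose ij.1 • (cscCoeff ij.1 * s ij.2) =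
      (2 * n + 1) * 2 ^ (2 * n) * (Q (2 * n)).eval 0 := by
  have h := congrArg (PowerSeries.coeff (2 * n + 1))
    egf_cscCoeff_mul_egf_springer_sub_rescale_neg_one
  rw [map_sub, coeff_rescale, Odd.neg_one_pow ⟨n, rfl⟩, egf_mul_egf, coeff_egf,
    two_mul (PowerSeries.X : ℚ⟦X⟧), add_mul, map_add, coeff_succ_X_mul, coeff_rescale, coeff_egf,
    Nat.factorial_succ] at h
  have : ((2 * n).factorial : ℚ) ≠ 0 := Nat.cast_ne_zero.mpr (Nat.factorial_ne_zero _)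
  field_simp at h
  push_cast at h
  refine mul_right_cancel₀ this ?_
  linear_combination h / 2

end Springer

theorem Finset.sum_range_two_mul_of_odd_eq_zero {M : Type*} [AddCommMonoid M] {f : ℕ → M}
    (hf : ∀ i, f (2 * i + 1) = 0) (n : ℕ) :
    ∑ k ∈ range (2 * n), f k = ∑ i ∈ range n, f (2 * i) := by
  induction n with
  | zero => simp
  | succ n ih =>
    rw [mul_add, mul_one, sum_range_succ, sum_range_succ, hf, ih, sum_range_succ, add_zero]

theorem secant_eq_sum_springer_bernoulli (n : ℕ) :
    (2 * n + 1 : ℚ) * 2 ^ (2 * n) * E (2 * n) =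
      s (2 * n + 1) +
        ∑ i ∈ Finset.range n,
          ((2 * n + 1).choose (2 * i + 2) : ℚ) * (-1) ^ (i + 2) * (4 ^ (i + 1) - 2) *
            _root_.bernoulli (2 * i + 2) * s (2 * n - 2 * i - 1) := by
  have hE : E (2 * n) = (Q (2 * n)).eval 0 := if_pos (even_two_mul n)
  have h_odd (i : ℕ) : (2 * n + 1).choose (2 * i + 1) •
      (cscCoeff (2 * i + 1) * s (2 * n + 1 - (2 * i + 1))) = 0 := by
    rw [cscCoeff_of_odd ⟨i, rfl⟩, zero_mul, smul_zero]
  rw [hE, ← sum_antidiagonal_choose_cscCoeff_mul_springer,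
    Nat.sum_antidiagonal_eq_sum_range_succ (fun i j => (2 * n + 1).choose i • (cscCoeff i * s j)),
    show (2 * n + 1).succ = 2 * (n + 1) by omega, sum_range_two_mul_of_odd_eq_zero h_odd,
    sum_range_succ', add_comm]
  congr 1
  · norm_num [cscCoeff]
  · refine sum_congr rfl fun i hi => ?_
    have hi : i < n := mem_range.mp hi
    rw [show 2 * n + 1 - 2 * (i + 1) = 2 * n - 2 * i - 1 by omega, cscCoeff,
      show 2 * (i + 1) / 2 = i + 1 by omega, pow_mul, show 2 * (i + 1) = 2 * i + 2 by ring,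
      nsmul_eq_mul]
    ring
end
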